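/- Let (α₁,β₁),(α₂,β₂) ∈ ℝ² with αᵢ ≤ βᵢ for i = 1,2, set sᵢ = βᵢ − αᵢ, assume λ_k < α₂, and set δ = α₂/λ_k − 1 > 0. Then for all u₁,u₂ ∈ V₁ and v₁,v₂ ∈ V₂ one has ⟨J_{α₂,β₂}'(u₂+v₂) − J_{α₁,β₁}'(u₁+v₁), u₂−u₁⟩ ≤ −δ‖u₂−u₁‖² + |β₂−α₂|(‖u₂−u₁‖_{L²} + ‖v₂−v₁‖_{L²})‖v₂−v₁‖_{L²} + |α₂−α₁|‖u₁‖_{L²}‖u₂−u₁‖_{L²} + |s₂−s₁|‖u₁+v₁‖_{L²}‖u₂−u₁‖_{L²}. -/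

import Mathlib

open MeasureTheory RealInnerProductSpace Filter Topology

/-
With `h = u₂ - u₁ ∈ V₁` orthogonal to `V₂` for both `B` and the `L²` product, the difference of
derivatives splits as `‖h‖² - α₂‖h‖²_{L²}`, which is at most `-δ‖h‖²` by the bound on `V₁`, plus
terms linear in `α₂ - α₁` and `s₂ - s₁`, plus `s₂⟪(w₂)⁻ - (w₁)⁻, h⟫` with `wᵢ = uᵢ + vᵢ`. The map
`f ↦ f⁻` on `L²` is antitone and `1`-Lipschitz, so `⟪(w₂)⁻ - (w₁)⁻, w₂ - w₁⟫ ≤ 0` and only the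
component `v₂ - v₁` of `w₂ - w₁ = h + (v₂ - v₁)` contributes to the last term.
-/

/-- The pairing `⟨J'_{α,β}(u), v⟩` of the Fréchet derivative of the functional
`J_{α,β}(u) = ½(B(u,u) - α∫_Ω (u⁺)² - β∫_Ω (u⁻)²)`, where the Hilbert space `X₀`
carries the Gagliardo-type inner product `B = ⟪·,·⟫` and `T : X₀ → L²(Ω)` is the
embedding into `L²(Ω)`. -/
noncomputable def DJfun {Ω : Type*} [MeasurableSpace Ω] {μ : Measure Ω}
    {X₀ : Type*} [NormedAddCommGroup X₀] [InnerProductSpace ℝ X₀]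
    (T : X₀ →ₗ[ℝ] Lp ℝ 2 μ) (α β : ℝ) (u v : X₀) : ℝ :=
  ⟪u, v⟫ - α * ⟪Lp.posPart (T u), T v⟫ + β * ⟪Lp.negPart (T u), T v⟫

namespace MeasureTheory.Lp

variable {α : Type*} [MeasurableSpace α] {μ : Measure α} {p : ENNReal}

theorem posPart_eq_add_negPart (f : Lp ℝ p μ) : posPart f = f + negPart f := by
  apply Lp.ext
  filter_upwards [coeFn_posPart f, coeFn_negPart_eq_max f, coeFn_add f (negPart f)]
    with a hpos hneg hadd
  rw [hpos, hadd, Pi.add_apply, hneg]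
  rcases le_total (f a) 0 with h | h
  · rw [max_eq_right h, max_eq_left (neg_nonneg.2 h)]; ring
  · rw [max_eq_left h, max_eq_right (neg_nonpos.2 h)]; ring

theorem norm_negPart_sub_negPart_le [Fact (1 ≤ p)] (f g : Lp ℝ p μ) :
    ‖negPart f - negPart g‖ ≤ ‖f - g‖ := by
  simpa [negPart, posPart, neg_add_eq_sub, norm_sub_rev g f] using
    lipschitzWith_pos_part.norm_compLp_sub_le (max_eq_right le_rfl) (-f) (-g)

theorem norm_negPart_le (f : Lp ℝ p μ) : ‖negPart f‖ ≤ ‖f‖ := by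
  simpa [negPart, posPart] using
    lipschitzWith_pos_part.norm_compLp_le (max_eq_right le_rfl) (-f)

end MeasureTheory.Lp

namespace MeasureTheory.L2

variable {α : Type*} [MeasurableSpace α] {μ : Measure α}

theorem inner_negPart_sub_negPart_sub_nonpos (f g : Lp ℝ 2 μ) :
    ⟪Lp.negPart f - Lp.negPart g, f - g⟫ ≤ 0 := by
  rw [L2.inner_def]
  apply integral_nonpos_of_ae
  filter_upwards [Lp.coeFn_negPart_eq_max f, Lp.coeFn_negPart_eq_max g,
    Lp.coeFn_sub (Lp.negPart f) (Lp.negPart g), Lp.coeFn_sub f g] with a hf hg hN hfg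
  simp only [RCLike.inner_apply, starRingEnd_apply, star_trivial, Pi.zero_apply]
  rw [hN, Pi.sub_apply, hf, hg, hfg, Pi.sub_apply]
  rcases le_total (f a) (g a) with h | h
  · exact mul_nonpos_of_nonpos_of_nonneg
      (sub_nonpos.2 h) (sub_nonneg.2 (max_le_max (neg_le_neg h) le_rfl))
  · exact mul_nonpos_of_nonneg_of_nonpos
      (sub_nonneg.2 h) (sub_nonpos.2 (max_le_max (neg_le_neg h) le_rfl))

theorem inner_negPart_sub_negPart_le (f g d : Lp ℝ 2 μ) :
    ⟪Lp.negPart f - Lp.negPart g, d⟫ ≤ ‖f - g‖ * ‖f - g - d‖ :=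
  calc ⟪Lp.negPart f - Lp.negPart g, d⟫
      = ⟪Lp.negPart f - Lp.negPart g, f - g⟫
        - ⟪Lp.negPart f - Lp.negPart g, f - g - d⟫ := by simp only [inner_sub_right]; ring
    _ ≤ ‖Lp.negPart f - Lp.negPart g‖ * ‖f - g - d‖ := by
      linarith [inner_negPart_sub_negPart_sub_nonpos f g,
        neg_le_of_abs_le (abs_real_inner_le_norm (Lp.negPart f - Lp.negPart g) (f - g - d))]
    _ ≤ ‖f - g‖ * ‖f - g - d‖ := by
      gcongr; exact Lp.norm_negPart_sub_negPart_le f g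

end MeasureTheory.L2

theorem mul_real_inner_le_abs_mul_norm_mul_norm {E : Type*} [NormedAddCommGroup E]
    [InnerProductSpace ℝ E] (c : ℝ) (x y : E) : c * ⟪x, y⟫ ≤ |c| * ‖x‖ * ‖y‖ := by
  rw [← real_inner_smul_left, ← Real.norm_eq_abs, ← norm_smul]
  exact real_inner_le_norm _ _

section DJfun

variable {Ω : Type*} [MeasurableSpace Ω] {μ : Measure Ω}
  {X : Type*} [NormedAddCommGroup X] [InnerProductSpace ℝ X] (T : X →ₗ[ℝ] Lp ℝ 2 μ)

theorem DJfun_eq (α β : ℝ) (u v : X) :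
    DJfun T α β u v = ⟪u, v⟫ - α * ⟪T u, T v⟫ + (β - α) * ⟪Lp.negPart (T u), T v⟫ := by
  rw [DJfun, Lp.posPart_eq_add_negPart, inner_add_left]; ring

theorem DJfun_sub_DJfun_le {α₁ β₁ α₂ β₂ : ℝ} (h₂ : α₂ ≤ β₂) {u₁ u₂ v₁ v₂ : X}
    (hv₁ : ⟪v₁, u₂ - u₁⟫ = 0) (hv₂ : ⟪v₂, u₂ - u₁⟫ = 0)
    (hTv₁ : ⟪T v₁, T (u₂ - u₁)⟫ = 0) (hTv₂ : ⟪T v₂, T (u₂ - u₁)⟫ = 0) :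
    DJfun T α₂ β₂ (u₂ + v₂) (u₂ - u₁) - DJfun T α₁ β₁ (u₁ + v₁) (u₂ - u₁)
      ≤ ‖u₂ - u₁‖ ^ 2 - α₂ * ‖T (u₂ - u₁)‖ ^ 2
        + |β₂ - α₂| * (‖T (u₂ - u₁)‖ + ‖T (v₂ - v₁)‖) * ‖T (v₂ - v₁)‖
        + |α₂ - α₁| * ‖T u₁‖ * ‖T (u₂ - u₁)‖
        + |(β₂ - α₂) - (β₁ - α₁)| * ‖T (u₁ + v₁)‖ * ‖T (u₂ - u₁)‖ := by
  have hsum : u₂ + v₂ - (u₁ + v₁) = (u₂ - u₁) + (v₂ - v₁) := by abel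
  have hw : T (u₂ + v₂) - T (u₁ + v₁) = T (u₂ - u₁) + T (v₂ - v₁) := by
    rw [← map_sub, ← map_add, hsum]
  have hd : ⟪v₂ - v₁, u₂ - u₁⟫ = 0 := by rw [inner_sub_left, hv₁, hv₂, sub_zero]
  have hTd : ⟪T (v₂ - v₁), T (u₂ - u₁)⟫ = 0 := by
    rw [map_sub, inner_sub_left, hTv₁, hTv₂, sub_zero]
  generalize u₂ - u₁ = h at *
  generalize v₂ - v₁ = d at *
  have hinner : ⟪u₂ + v₂, h⟫ - ⟪u₁ + v₁, h⟫ = ‖h‖ ^ 2 := by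
    rw [← inner_sub_left, hsum, inner_add_left, hd, real_inner_self_eq_norm_sq, add_zero]
  have hTinner : ⟪T (u₂ + v₂), T h⟫ - ⟪T (u₁ + v₁), T h⟫ = ‖T h‖ ^ 2 := by
    rw [← inner_sub_left, hw, inner_add_left, hTd, real_inner_self_eq_norm_sq, add_zero]
  have hTu₁ : ⟪T (u₁ + v₁), T h⟫ = ⟪T u₁, T h⟫ := by
    rw [map_add, inner_add_left, hTv₁, add_zero]
  have bound_negPart : (β₂ - α₂) * ⟪Lp.negPart (T (u₂ + v₂)) - Lp.negPart (T (u₁ + v₁)), T h⟫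
      ≤ |β₂ - α₂| * (‖T h‖ + ‖T d‖) * ‖T d‖ := by
    rw [abs_of_nonneg (sub_nonneg.2 h₂), mul_assoc]
    gcongr
    calc _ ≤ ‖T (u₂ + v₂) - T (u₁ + v₁)‖ * ‖T (u₂ + v₂) - T (u₁ + v₁) - T h‖ :=
          L2.inner_negPart_sub_negPart_le _ _ _
      _ ≤ (‖T h‖ + ‖T d‖) * ‖T d‖ := by
          rw [hw, add_sub_cancel_left]; gcongr; exact norm_add_le _ _
  have bound_negPart₁ : ((β₂ - α₂) - (β₁ - α₁)) * ⟪Lp.negPart (T (u₁ + v₁)), T h⟫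
      ≤ |(β₂ - α₂) - (β₁ - α₁)| * ‖T (u₁ + v₁)‖ * ‖T h‖ :=
    (mul_real_inner_le_abs_mul_norm_mul_norm _ _ _).trans (by gcongr; exact Lp.norm_negPart_le _)
  have bound_u₁ : (α₁ - α₂) * ⟪T u₁, T h⟫ ≤ |α₂ - α₁| * ‖T u₁‖ * ‖T h‖ := by
    rw [abs_sub_comm]; exact mul_real_inner_le_abs_mul_norm_mul_norm _ _ _
  rw [inner_sub_left] at bound_negPart
  rw [DJfun_eq, DJfun_eq]
  linear_combination hinner - α₂ * hTinner + (α₁ - α₂) * hTu₁ + bound_negPart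
    + bound_negPart₁ + bound_u₁

end DJfun

theorem stmt_0_general
    {n : ℕ}
    {Ωs : Set (EuclideanSpace ℝ (Fin n))}
    {X₀ : Type*} [NormedAddCommGroup X₀] [InnerProductSpace ℝ X₀]
    (T : X₀ →ₗ[ℝ] Lp ℝ 2 (volume.restrict Ωs))
    {lk : ℝ} (hlk0 : 0 < lk)
    (V₁ V₂ : Submodule ℝ X₀)
    (hV₂ : ∀ v : X₀, v ∈ V₂ ↔ ∀ u ∈ V₁, ⟪u, v⟫ = 0 ∧ ⟪T u, T v⟫ = 0)
    (hV₁b : ∀ u ∈ V₁, ⟪u, u⟫ ≤ lk * ‖T u‖ ^ 2)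
    -- the two parameter pairs
    {α₁ β₁ α₂ β₂ : ℝ} (h₂ : α₂ ≤ β₂) (hα₂ : lk < α₂) :
    ∀ (u₁ u₂ : V₁) (v₁ v₂ : V₂),
      DJfun T α₂ β₂ ((u₂ : X₀) + (v₂ : X₀)) ((u₂ : X₀) - (u₁ : X₀))
        - DJfun T α₁ β₁ ((u₁ : X₀) + (v₁ : X₀)) ((u₂ : X₀) - (u₁ : X₀))
      ≤ -(α₂ / lk - 1) * ‖(u₂ : X₀) - (u₁ : X₀)‖ ^ 2
        + |β₂ - α₂| * (‖T ((u₂ : X₀) - (u₁ : X₀))‖ + ‖T ((v₂ : X₀) - (v₁ : X₀))‖)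
            * ‖T ((v₂ : X₀) - (v₁ : X₀))‖
        + |α₂ - α₁| * ‖T (u₁ : X₀)‖ * ‖T ((u₂ : X₀) - (u₁ : X₀))‖
        + |(β₂ - α₂) - (β₁ - α₁)| * ‖T ((u₁ : X₀) + (v₁ : X₀))‖
            * ‖T ((u₂ : X₀) - (u₁ : X₀))‖ := by
  intro u₁ u₂ v₁ v₂
  have hmem : (u₂ : X₀) - u₁ ∈ V₁ := sub_mem u₂.2 u₁.2
  have horth (v : V₂) : ⟪(v : X₀), u₂ - u₁⟫ = 0 ∧ ⟪T v, T (u₂ - u₁)⟫ = 0 := by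
    obtain ⟨h, hT⟩ := (hV₂ v).1 v.2 _ hmem
    exact ⟨real_inner_comm (v : X₀) _ ▸ h, real_inner_comm (T v) _ ▸ hT⟩
  have hcoercive : ‖(u₂ : X₀) - u₁‖ ^ 2 - α₂ * ‖T (u₂ - u₁)‖ ^ 2
      ≤ -(α₂ / lk - 1) * ‖(u₂ : X₀) - u₁‖ ^ 2 := by
    have hV₁ := hV₁b _ hmem
    rw [real_inner_self_eq_norm_sq] at hV₁
    have hscaled : α₂ / lk * ‖(u₂ : X₀) - u₁‖ ^ 2 ≤ α₂ * ‖T (u₂ - u₁)‖ ^ 2 := by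
      rw [div_mul_eq_mul_div, div_le_iff₀ hlk0]
      linarith [mul_le_mul_of_nonneg_left hV₁ (hlk0.trans hα₂).le]
    linarith
  have hsplit := DJfun_sub_DJfun_le T (α₁ := α₁) (β₁ := β₁) h₂
    (horth v₁).1 (horth v₂).1 (horth v₁).2 (horth v₂).2
  linarith

theorem stmt_0
    {n : ℕ} {s : ℝ} (hs0 : 0 < s) (hs1 : s < 1) (hns : 2 * s < (n : ℝ))
    {Ωs : Set (EuclideanSpace ℝ (Fin n))} (hΩb : Bornology.IsBounded Ωs)
    (hΩm : MeasurableSet Ωs)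
    {K : EuclideanSpace ℝ (Fin n) → ℝ} (hKpos : ∀ x, x ≠ 0 → 0 < K x)
    (hK1 : Integrable (fun x => min (‖x‖ ^ 2) 1 * K x))
    (hK2 : ∃ lam > 0, ∀ x, x ≠ 0 → lam * ‖x‖ ^ (-((n : ℝ) + 2 * s)) ≤ K x)
    (hK3 : ∀ x, K (-x) = K x)
    {X₀ : Type*} [NormedAddCommGroup X₀] [InnerProductSpace ℝ X₀] [CompleteSpace X₀]
    (T : X₀ →ₗ[ℝ] Lp ℝ 2 (volume.restrict Ωs)) (hT : Function.Injective T)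
    {lk lk1 : ℝ} (hlk0 : 0 < lk) (hlk : lk < lk1)
    (V₁ V₂ : Submodule ℝ X₀) [FiniteDimensional ℝ V₁]
    (hV₂ : ∀ v : X₀, v ∈ V₂ ↔ ∀ u ∈ V₁, ⟪u, v⟫ = 0 ∧ ⟪T u, T v⟫ = 0)
    (hcompl : IsCompl V₁ V₂)
    (hV₁b : ∀ u ∈ V₁, ⟪u, u⟫ ≤ lk * ‖T u‖ ^ 2)
    (hV₂b : ∀ v ∈ V₂, lk1 * ‖T v‖ ^ 2 ≤ ⟪v, v⟫)
    -- the two parameter pairs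
    {α₁ β₁ α₂ β₂ : ℝ} (h₁ : α₁ ≤ β₁) (h₂ : α₂ ≤ β₂) (hα₂ : lk < α₂) :
    ∀ (u₁ u₂ : V₁) (v₁ v₂ : V₂),
      DJfun T α₂ β₂ ((u₂ : X₀) + (v₂ : X₀)) ((u₂ : X₀) - (u₁ : X₀))
        - DJfun T α₁ β₁ ((u₁ : X₀) + (v₁ : X₀)) ((u₂ : X₀) - (u₁ : X₀))
      ≤ -(α₂ / lk - 1) * ‖(u₂ : X₀) - (u₁ : X₀)‖ ^ 2
        + |β₂ - α₂| * (‖T ((u₂ : X₀) - (u₁ : X₀))‖ + ‖T ((v₂ : X₀) - (v₁ : X₀))‖)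
            * ‖T ((v₂ : X₀) - (v₁ : X₀))‖
        + |α₂ - α₁| * ‖T (u₁ : X₀)‖ * ‖T ((u₂ : X₀) - (u₁ : X₀))‖
        + |(β₂ - α₂) - (β₁ - α₁)| * ‖T ((u₁ : X₀) + (v₁ : X₀))‖
            * ‖T ((u₂ : X₀) - (u₁ : X₀))‖ :=
  stmt_0_general T hlk0 V₁ V₂ hV₂ hV₁b h₂ hα₂
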